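/- arXiv:1106.1126 — 6 statements merged into one kernel-verified Lean document; each statement's English description precedes it below -/
import Mathlib

section
/- Let A be an integral domain, f(y) ∈ A[y] a monic polynomial of degree d, and p a positive integer that is invertible in A and divides d. Then there exists a unique monic polynomial g(y) ∈ A[y] of degree d/p such that deg(f - g^p) < d - d/p. -/
open Polynomial Finset

lemma aux_deg_lt {A : Type*} [CommRing A] {u v : Polynomial A} {n : ℕ}
    (hu : u.degree ≤ n) (hv : v.degree ≤ n) (h : u.coeff n = v.coeff n) :
    (u - v).degree < n := by
  rw [degree_lt_iff_coeff_zero]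
  intro m hm
  rw [coeff_sub]
  rcases eq_or_lt_of_le (Nat.cast_le.mp hm) with h' | h'
  · subst h'; rw [h, sub_self]
  · rw [coeff_eq_zero_of_degree_lt (lt_of_le_of_lt hu (by exact_mod_cast h')),
      coeff_eq_zero_of_degree_lt (lt_of_le_of_lt hv (by exact_mod_cast h')), sub_self]

lemma aux_bot_lt (n : ℕ) : (⊥ : WithBot ℕ) < (n : WithBot ℕ) := by
  exact_mod_cast WithBot.bot_lt_coe n

lemma aux_lt_succ (x : WithBot ℕ) (n : ℕ) : x < ((n + 1 : ℕ) : WithBot ℕ) ↔ x ≤ (n : ℕ) := by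
  induction x using WithBot.recBotCoe with
  | bot => exact iff_of_true (aux_bot_lt (n + 1)) bot_le
  | coe a =>
    rw [← Nat.cast_withBot]
    constructor
    · intro h; exact_mod_cast Nat.lt_succ_iff.mp (by exact_mod_cast h)
    · intro h; exact_mod_cast Nat.lt_succ_iff.mpr (by exact_mod_cast h)

lemma aux_step {A : Type*} [CommRing A] [IsDomain A] (p e k : ℕ) (hp : 0 < p)
    (hpu : IsUnit (p : A)) (hk : k < e) (f g : Polynomial A) (hg : g.Monic)
    (hge : g.natDegree = e)
    (h : (f - g ^ p).degree ≤ (((p - 1) * e + k : ℕ) : WithBot ℕ)) :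
    ∃ g' : Polynomial A, g'.Monic ∧ g'.natDegree = e ∧
      (f - g' ^ p).degree < (((p - 1) * e + k : ℕ) : WithBot ℕ) := by
  set N : ℕ := (p - 1) * e + k with hN
  set c : A := (f - g ^ p).coeff N with hc
  set b : A := (↑hpu.unit⁻¹ : A) * c with hb
  have hpb : (p : A) * b = c := by
    rw [hb, ← mul_assoc, IsUnit.mul_val_inv, one_mul]
  set a : Polynomial A := C b * X ^ k with ha
  have hadeg : a.degree ≤ (k : ℕ) := by
    calc a.degree ≤ (C b).degree + (X ^ k : Polynomial A).degree := degree_mul_le _ _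
    _ ≤ 0 + k := add_le_add degree_C_le (degree_X_pow_le (R := A) k)
    _ = k := by rw [zero_add]
  have hgdeg : g.degree = (e : ℕ) := by rw [degree_eq_natDegree hg.ne_zero, hge]
  have hglt : a.degree < g.degree := lt_of_le_of_lt hadeg (by rw [hgdeg]; exact_mod_cast hk)
  refine ⟨g + a, hg.add_of_left hglt, ?_, ?_⟩
  · rw [natDegree_add_eq_left_of_degree_lt hglt, hge]
  have hpow : (g + a) ^ p =
      (∑ m ∈ range (p - 1), g ^ m * a ^ (p - m) * (p.choose m : Polynomial A))
        + g ^ (p - 1) * a * p + g ^ p := by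
    rw [add_pow]
    rw [show p + 1 = (p - 1) + 1 + 1 by omega, sum_range_succ, sum_range_succ]
    have h1 : p - (p - 1) = 1 := by omega
    have h2 : p - (p - 1 + 1) = 0 := by omega
    have h3 : p - 1 + 1 = p := by omega
    have hch : p.choose (p - 1) = p := by
      cases p with
      | zero => omega
      | succ q => simp [Nat.choose_succ_self_right q]
    rw [h1, h2, h3, pow_one, pow_zero, Nat.choose_self, hch]
    push_cast
    ring
  have hkey : f - (g + a) ^ p = ((f - g ^ p) - g ^ (p - 1) * a * p)
      - (∑ m ∈ range (p - 1), g ^ m * a ^ (p - m) * (p.choose m : Polynomial A)) := by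
    rw [hpow]; ring
  rw [hkey]
  refine lt_of_le_of_lt (degree_sub_le _ _) (max_lt ?_ ?_)
  · -- top part
    have hv : g ^ (p - 1) * a * (p : Polynomial A) = g ^ (p - 1) * C c * X ^ k := by
      calc g ^ (p - 1) * a * (p : Polynomial A)
          = g ^ (p - 1) * (C b * (p : Polynomial A)) * X ^ k := by rw [ha]; ring
        _ = g ^ (p - 1) * C c * X ^ k := by
            rw [← C_eq_natCast, ← C_mul, mul_comm b, hpb]
    rw [hv]
    have hgp : (g ^ (p - 1)).natDegree = (p - 1) * e := by
      rw [natDegree_pow, hge]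
    have hgpd : (g ^ (p - 1)).degree = (((p - 1) * e : ℕ) : WithBot ℕ) := by
      rw [degree_eq_natDegree (hg.pow (p - 1)).ne_zero, hgp]
    apply aux_deg_lt h
    · calc (g ^ (p - 1) * C c * X ^ k).degree
          ≤ (g ^ (p - 1)).degree + (C c).degree + (X ^ k : Polynomial A).degree := by
            refine le_trans (degree_mul_le _ _) (add_le_add (degree_mul_le _ _) le_rfl)
        _ ≤ ((p - 1) * e : ℕ) + 0 + (k : ℕ) := by
            exact add_le_add (add_le_add hgpd.le degree_C_le) (degree_X_pow_le _)
        _ = (N : WithBot ℕ) := by rw [add_zero, hN]; push_cast; rfl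
    · rw [hN, coeff_mul_X_pow, coeff_mul_C]
      have : (g ^ (p - 1)).coeff ((p - 1) * e) = 1 := by
        rw [← hgp]; exact (hg.pow (p - 1)).coeff_natDegree
      rw [this, one_mul]
  · -- sum part
    refine lt_of_le_of_lt (degree_sum_le _ _) ?_
    rw [Finset.sup_lt_iff (aux_bot_lt N)]
    intro m hm
    have hm2 : m ≤ p - 2 := by have := mem_range.mp hm; omega
    have hmp : m + 2 ≤ p := by have := mem_range.mp hm; omega
    have hapow : a ^ (p - m) = C (b ^ (p - m)) * X ^ (k * (p - m)) := by
      rw [ha, mul_pow, ← C_pow, ← pow_mul]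
    have hterm : (g ^ m * a ^ (p - m) * (p.choose m : Polynomial A)).degree
        ≤ ((m * e + k * (p - m) : ℕ) : WithBot ℕ) := by
      rw [hapow]
      calc (g ^ m * (C (b ^ (p - m)) * X ^ (k * (p - m))) * (p.choose m : Polynomial A)).degree
          ≤ (g ^ m).degree + (C (b ^ (p - m)) * X ^ (k * (p - m))).degree
            + ((p.choose m : Polynomial A)).degree := by
            refine le_trans (degree_mul_le _ _) (add_le_add (degree_mul_le _ _) le_rfl)
        _ ≤ ((m * e : ℕ) : WithBot ℕ) + (0 + ((k * (p - m) : ℕ) : WithBot ℕ)) + 0 := by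
            refine add_le_add (add_le_add ?_
              (le_trans (degree_mul_le _ _) (add_le_add degree_C_le (degree_X_pow_le _)))) ?_
            · rw [degree_eq_natDegree (hg.pow m).ne_zero, natDegree_pow, hge]
            · rw [← C_eq_natCast]; exact degree_C_le
        _ = ((m * e + k * (p - m) : ℕ) : WithBot ℕ) := by rw [zero_add, add_zero]; push_cast; rfl
    refine lt_of_le_of_lt hterm ?_
    have harith : m * e + k * (p - m) < N := by
      rw [hN]
      obtain ⟨q, rfl⟩ : ∃ q, p = m + q + 2 := ⟨p - m - 2, by omega⟩
      have h4 : m + q + 2 - m = q + 2 := by omega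
      have h5 : m + q + 2 - 1 = m + q + 1 := by omega
      rw [h4, h5]
      nlinarith [Nat.mul_le_mul_left q (le_of_lt hk)]
    exact_mod_cast harith



/-- **Approximate root** (Abhyankar–Moh).  Let `A` be an integral domain, `f ∈ A[y]` a monic
polynomial of degree `d`, and `p` a positive integer dividing `d` which is invertible in `A`
(i.e. `p·1_A` is a unit).  Then there exists a unique monic polynomial `g ∈ A[y]` of degree
`d/p` such that `deg (f - g^p) < d - d/p`. -/
theorem approximate_root_exists_unique {A : Type*} [CommRing A] [IsDomain A]
    (d p : ℕ) (hp : 0 < p) (hpd : p ∣ d) (hpu : IsUnit (p : A))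
    (f : Polynomial A) (hf : f.Monic) (hdeg : f.natDegree = d) :
    ∃! g : Polynomial A, g.Monic ∧ g.natDegree = d / p ∧
      (f - g ^ p).degree < ((d - d / p : ℕ) : WithBot ℕ) := by
  obtain ⟨e, rfl⟩ : ∃ e, d = p * e := hpd
  have hdp : p * e / p = e := Nat.mul_div_cancel_left e hp
  have hele : e ≤ p * e := Nat.le_mul_of_pos_left e hp
  have hsub : p * e - p * e / p = (p - 1) * e := by rw [hdp, Nat.sub_one_mul]
  -- existence by downward induction
  have main : ∀ j : ℕ, j ≤ e → ∃ g : Polynomial A, g.Monic ∧ g.natDegree = e ∧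
      (f - g ^ p).degree < (((p - 1) * e + (e - j) : ℕ) : WithBot ℕ) := by
    intro j
    induction j with
    | zero =>
      intro _
      refine ⟨X ^ e, monic_X_pow e, natDegree_X_pow e, ?_⟩
      have h1 : (p - 1) * e + (e - 0) = p * e := by
        rw [Nat.sub_one_mul, Nat.sub_zero, Nat.sub_add_cancel hele]
      rw [h1, ← pow_mul, mul_comm e p]
      have hfd : f.degree = ((p * e : ℕ) : WithBot ℕ) := by
        rw [degree_eq_natDegree hf.ne_zero, hdeg]
      calc (f - X ^ (p * e)).degree < f.degree := by
            refine degree_sub_lt ?_ hf.ne_zero ?_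
            · rw [hfd, degree_X_pow]
            · rw [hf.leadingCoeff, (monic_X_pow _).leadingCoeff]
        _ = _ := hfd
    | succ j ih =>
      intro hj
      obtain ⟨g, hg, hge, hdg⟩ := ih (Nat.le_of_succ_le hj)
      have hk : e - (j + 1) < e := by omega
      rw [show e - j = (e - (j + 1)) + 1 by omega,
        show (p - 1) * e + (e - (j + 1) + 1) = ((p - 1) * e + (e - (j + 1))) + 1 by omega,
        aux_lt_succ] at hdg
      exact aux_step p e (e - (j + 1)) hp hpu hk f g hg hge hdg
  obtain ⟨g, hg, hge, hdg⟩ := main e le_rfl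
  rw [Nat.sub_self, Nat.add_zero] at hdg
  refine ⟨g, ⟨hg, by rw [hdp]; exact hge, by rw [hsub]; exact hdg⟩, ?_⟩
  -- uniqueness
  rintro h ⟨hh, hhe, hhd⟩
  rw [hdp] at hhe
  rw [hsub] at hhd
  by_contra hne
  have hsubne : h - g ≠ 0 := sub_ne_zero.mpr hne
  set M : ℕ := (p - 1) * e with hM
  set S : Polynomial A := ∑ i ∈ range p, h ^ i * g ^ (p - 1 - i) with hS
  have hmul : S * (h - g) = h ^ p - g ^ p := geom_sum₂_mul h g p
  have hdiff : (h ^ p - g ^ p).degree < (M : WithBot ℕ) := by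
    have : h ^ p - g ^ p = (f - g ^ p) - (f - h ^ p) := by ring
    rw [this]
    exact lt_of_le_of_lt (degree_sub_le _ _) (max_lt hdg hhd)
  -- S has coefficient p at degree M
  have hterm : ∀ i ∈ range p, (h ^ i * g ^ (p - 1 - i)).coeff M = 1 := by
    intro i hi
    have hi' : i ≤ p - 1 := by have := mem_range.mp hi; omega
    have hmon : (h ^ i * g ^ (p - 1 - i)).Monic := (hh.pow i).mul (hg.pow _)
    have hnd : (h ^ i * g ^ (p - 1 - i)).natDegree = M := by
      rw [natDegree_mul (pow_ne_zero _ hh.ne_zero) (pow_ne_zero _ hg.ne_zero),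
        natDegree_pow, natDegree_pow, hge, hhe, hM, ← add_mul]
      congr 1
      omega
    rw [← hnd]
    exact hmon.coeff_natDegree
  have hScoeff : S.coeff M = (p : A) := by
    rw [hS, finset_sum_coeff, Finset.sum_congr rfl hterm]
    simp
  have hSne : S.coeff M ≠ 0 := by rw [hScoeff]; exact hpu.ne_zero
  have hSdeg : (M : WithBot ℕ) ≤ S.degree := le_degree_of_ne_zero hSne
  have hprod : (M : WithBot ℕ) ≤ (S * (h - g)).degree := by
    rw [degree_mul]
    calc (M : WithBot ℕ) = (M : WithBot ℕ) + 0 := by rw [add_zero]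
    _ ≤ S.degree + (h - g).degree :=
        add_le_add hSdeg (zero_le_degree_iff.mpr hsubne)
  rw [hmul] at hprod
  exact absurd hdiff (not_lt.mpr hprod)
end

section
/- Let h₁, h₂ be polynomials in y with coefficients that are (possibly fractional) power series in x, and let τ be a positive rational. If jac(in_τ(h₁), in_τ(h₂)) ≠ 0, then in_τ(jac(h₁,h₂)) = jac(in_τ(h₁), in_τ(h₂)). -/
noncomputable section

open Polynomial

/-- Polynomials in `y` with fractional power series (Hahn series with rational exponents)
coefficients in `x`. -/
abbrev FracPoly := Polynomial (HahnSeries ℚ ℂ)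

/-- The set of weights `i + τ·j` (as real numbers) of the monomials `x^i y^j` appearing
in `g`. -/
def wSupp (τ : ℚ) (g : FracPoly) : Set ℝ :=
  {r | ∃ j : ℕ, ∃ i ∈ (g.coeff j).support, r = (i : ℝ) + (τ : ℝ) * j}

/-- The weighted order `ord_τ(g) = min { i + τ·j : a_{ij} ≠ 0 }` (with weights `w(x)=1`,
`w(y)=τ`), computed as an infimum of real numbers. -/
def ordT (τ : ℚ) (g : FracPoly) : ℝ := sInf (wSupp τ g)

/-- Truncation of a Hahn series retaining only the exponents `i` with `i + τ·j = r`. -/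
def truncAt (τ : ℚ) (r : ℝ) (j : ℕ) (a : HahnSeries ℚ ℂ) : HahnSeries ℚ ℂ where
  coeff i := if ((i : ℝ) + (τ : ℝ) * j = r) then a.coeff i else 0
  isPWO_support' := a.isPWO_support.mono (by
    intro i hi
    simp only [Function.mem_support] at hi
    by_cases h : ((i : ℝ) + (τ : ℝ) * j = r) <;> simp [h] at hi
    exact hi)

/-- The weighted initial part `in_τ(g) = Σ_{i+τj = ord_τ(g)} a_{ij} x^i y^j`. -/
def inT (τ : ℚ) (g : FracPoly) : FracPoly :=
  g.sum fun j a => Polynomial.C (truncAt τ (ordT τ g) j a) * Polynomial.X ^ j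

/-- Multiplication of the coefficients of a Hahn series by their exponent:
`Σ aᵢ xⁱ ↦ Σ i·aᵢ xⁱ`. -/
def expMul (a : HahnSeries ℚ ℂ) : HahnSeries ℚ ℂ where
  coeff i := (i : ℂ) * a.coeff i
  isPWO_support' := a.isPWO_support.mono (by
    intro i hi
    simp only [Function.mem_support] at hi ⊢
    intro h
    simp [h] at hi)

/-- The partial derivative `∂/∂x` on Hahn series: `Σ aᵢ xⁱ ↦ Σ i·aᵢ x^{i-1}`. -/
def derivX (a : HahnSeries ℚ ℂ) : HahnSeries ℚ ℂ :=
  HahnSeries.embDomain (OrderIso.addRight (-1 : ℚ)).toOrderEmbedding (expMul a)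

/-- The partial derivative `∂/∂x` applied coefficientwise to a polynomial in `y` with
fractional power series coefficients. -/
def pderivX (h : FracPoly) : FracPoly :=
  h.sum fun n a => Polynomial.C (derivX a) * Polynomial.X ^ n

/-- The Jacobian determinant `jac(f,g) = f_x g_y − f_y g_x`. -/
def jacF (f g : FracPoly) : FracPoly :=
  pderivX f * Polynomial.derivative g - Polynomial.derivative f * pderivX g

/-! Weights add under multiplication and drop by `1` under `∂/∂x` and by `τ` under `∂/∂y`,
so the Jacobian of two series of weights in `A` and `B` has weights in `A + B - {1 + τ}`.
Writing `hₖ = in_τ(hₖ) + Tₖ` with `Tₖ` of weights `> ord_τ(hₖ)`, bilinearity gives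
`jac(h₁,h₂) = jac(in_τ h₁, in_τ h₂) + (weights > ord_τ h₁ + ord_τ h₂ - 1 - τ)`, and the first
summand is homogeneous of that weight; when it is nonzero it is the initial part. -/

open scoped Pointwise
open Set

lemma Polynomial.coeff_sum_C_mul_X_pow {R : Type*} [Semiring R] (g : R[X]) (F : ℕ → R → R)
    (hF : ∀ n, F n 0 = 0) (n : ℕ) :
    (g.sum fun j a => C (F j a) * X ^ j).coeff n = F n (g.coeff n) := by
  rw [Polynomial.sum_def, Polynomial.finsetSum_coeff]
  simp only [coeff_C_mul, coeff_X_pow, mul_ite, mul_one, mul_zero, Finset.sum_ite_eq]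
  split_ifs with h
  · rfl
  · rw [notMem_support_iff.mp h, hF]

lemma Polynomial.exists_coeff_coeff_ne_zero_of_mul {Γ R : Type*} [AddCommMonoid Γ]
    [PartialOrder Γ] [IsOrderedCancelAddMonoid Γ] [Semiring R] {f g : (HahnSeries Γ R)[X]}
    {n : ℕ} {i : Γ}
    (h : ((f * g).coeff n).coeff i ≠ 0) :
    ∃ n₁ n₂ : ℕ, ∃ i₁ i₂ : Γ, n₁ + n₂ = n ∧ i₁ + i₂ = i ∧
      (f.coeff n₁).coeff i₁ ≠ 0 ∧ (g.coeff n₂).coeff i₂ ≠ 0 := by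
  rw [coeff_mul, ← HahnSeries.coeff.addMonoidHom_apply, map_sum] at h
  obtain ⟨p, hp, hp0⟩ := Finset.exists_ne_zero_of_sum_ne_zero h
  rw [HahnSeries.coeff.addMonoidHom_apply, HahnSeries.coeff_mul] at hp0
  obtain ⟨q, hq, hq0⟩ := Finset.exists_ne_zero_of_sum_ne_zero hp0
  exact ⟨p.1, p.2, q.1, q.2, Finset.HasAntidiagonal.mem_antidiagonal.mp hp,
    (Finset.mem_antidiagonal.mp hq).2.2,
    left_ne_zero_of_mul hq0, right_ne_zero_of_mul hq0⟩

lemma derivX_coeff (a : HahnSeries ℚ ℂ) (i : ℚ) :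
    (derivX a).coeff i = ((i + 1 : ℚ) : ℂ) * a.coeff (i + 1) := by
  have h : (OrderIso.addRight (-1 : ℚ)).toOrderEmbedding (i + 1) = i := by simp
  conv_lhs => rw [derivX, ← h, HahnSeries.embDomain_coeff]
  rfl

lemma pderivX_coeff (g : FracPoly) (n : ℕ) : (pderivX g).coeff n = derivX (g.coeff n) :=
  coeff_sum_C_mul_X_pow g _ (fun _ => HahnSeries.ext <| funext fun i => by simp [derivX_coeff]) n

lemma pderivX_sub (f g : FracPoly) : pderivX (f - g) = pderivX f - pderivX g := by
  ext n i
  simp only [pderivX_coeff, coeff_sub, HahnSeries.coeff_sub, derivX_coeff]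
  ring

lemma inT_coeff_coeff (τ : ℚ) (g : FracPoly) (j : ℕ) (i : ℚ) :
    ((inT τ g).coeff j).coeff i =
      if (i : ℝ) + τ * j = ordT τ g then (g.coeff j).coeff i else 0 := by
  rw [inT, coeff_sum_C_mul_X_pow g _ (fun _ => HahnSeries.ext <| funext fun _ => by
    simp [truncAt])]
  rfl

section wSupp

variable {τ : ℚ}

lemma mem_wSupp {g : FracPoly} {j : ℕ} {i : ℚ} (h : (g.coeff j).coeff i ≠ 0) :
    (i : ℝ) + τ * j ∈ wSupp τ g :=
  ⟨j, i, h, rfl⟩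

lemma coeff_coeff_eq_zero_of_wSupp_subset {g : FracPoly} {S : Set ℝ} (hg : wSupp τ g ⊆ S)
    {j : ℕ} {i : ℚ} (hS : (i : ℝ) + τ * j ∉ S) : (g.coeff j).coeff i = 0 :=
  not_not.mp fun h => hS (hg (mem_wSupp h))

lemma wSupp_nonempty {g : FracPoly} (hg : g ≠ 0) : (wSupp τ g).Nonempty := by
  obtain ⟨j, hj⟩ := nonempty_support_iff.2 hg
  obtain ⟨i, hi⟩ := HahnSeries.support_nonempty_iff.2 (mem_support_iff.1 hj)
  exact ⟨_, j, i, hi, rfl⟩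

/-- Each coefficient of `g` has well-ordered support, and only finitely many are nonzero. -/
lemma bddBelow_wSupp (g : FracPoly) : BddBelow (wSupp τ g) := by
  refine ((g.support.finite_toSet).bddBelow_biUnion.2 fun j _ =>
    bddBelow_Ici (a := ((g.coeff j).order : ℝ) + τ * j)).mono ?_
  rintro _ ⟨j, i, hi, rfl⟩
  have hj : g.coeff j ≠ 0 := HahnSeries.ne_zero_of_coeff_ne_zero hi
  simp only [mem_iUnion, mem_Ici, Finset.mem_coe, mem_support_iff]
  exact ⟨j, hj, by gcongr; exact_mod_cast HahnSeries.order_le_of_coeff_ne_zero hi⟩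

lemma wSupp_subset_Ici_ordT (g : FracPoly) : wSupp τ g ⊆ Ici (ordT τ g) :=
  fun _ hr => csInf_le (bddBelow_wSupp g) hr

lemma wSupp_inT_subset (g : FracPoly) : wSupp τ (inT τ g) ⊆ {ordT τ g} := by
  rintro _ ⟨j, i, hi, rfl⟩
  rw [HahnSeries.mem_support, inT_coeff_coeff] at hi
  exact not_not.mp fun hw => hi (if_neg hw)

lemma wSupp_sub_inT_subset (g : FracPoly) : wSupp τ (g - inT τ g) ⊆ Ioi (ordT τ g) := by
  rintro _ ⟨j, i, hi, rfl⟩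
  rw [HahnSeries.mem_support, coeff_sub, HahnSeries.coeff_sub, inT_coeff_coeff] at hi
  split_ifs at hi with hw
  · exact absurd (sub_self _) hi
  · rw [sub_zero] at hi
    exact (wSupp_subset_Ici_ordT g (mem_wSupp hi)).lt_of_ne' hw

lemma wSupp_add_subset (f g : FracPoly) : wSupp τ (f + g) ⊆ wSupp τ f ∪ wSupp τ g := by
  rintro _ ⟨j, i, hi, rfl⟩
  rw [HahnSeries.mem_support, coeff_add, HahnSeries.coeff_add] at hi
  by_cases hf : (f.coeff j).coeff i = 0
  · exact Or.inr (mem_wSupp (by simpa [hf] using hi))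
  · exact Or.inl (mem_wSupp hf)

lemma wSupp_sub_subset (f g : FracPoly) : wSupp τ (f - g) ⊆ wSupp τ f ∪ wSupp τ g := by
  rw [sub_eq_add_neg f g]
  refine (wSupp_add_subset f (-g)).trans (union_subset_union_right _ ?_)
  rintro _ ⟨j, i, hi, rfl⟩
  exact mem_wSupp (neg_ne_zero.mp hi)

lemma wSupp_mul_subset (f g : FracPoly) : wSupp τ (f * g) ⊆ wSupp τ f + wSupp τ g := by
  rintro _ ⟨n, i, hi, rfl⟩
  obtain ⟨n₁, n₂, i₁, i₂, rfl, rfl, h₁, h₂⟩ := exists_coeff_coeff_ne_zero_of_mul hi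
  exact ⟨_, mem_wSupp h₁, _, mem_wSupp h₂, by push_cast; ring⟩

lemma wSupp_pderivX_subset (g : FracPoly) : wSupp τ (pderivX g) ⊆ wSupp τ g - {1} := by
  rintro _ ⟨j, i, hi, rfl⟩
  rw [HahnSeries.mem_support, pderivX_coeff, derivX_coeff] at hi
  exact ⟨_, mem_wSupp (right_ne_zero_of_mul hi), 1, rfl, by push_cast; ring⟩

lemma wSupp_derivative_subset (g : FracPoly) :
    wSupp τ (derivative g) ⊆ wSupp τ g - {(τ : ℝ)} := by
  rintro _ ⟨j, i, hi, rfl⟩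
  rw [HahnSeries.mem_support, coeff_derivative, ← Nat.cast_add_one, ← nsmul_eq_mul',
    HahnSeries.coeff_smul] at hi
  exact ⟨_, mem_wSupp (right_ne_zero_of_smul hi), _, rfl, by push_cast; ring⟩

lemma wSupp_jacF_subset {f g : FracPoly} {A B : Set ℝ} (hf : wSupp τ f ⊆ A)
    (hg : wSupp τ g ⊆ B) :
    wSupp τ (jacF f g) ⊆ A + B - {1 + (τ : ℝ)} := by
  refine (wSupp_sub_subset _ _).trans (union_subset ?_ ?_)
  · refine (wSupp_mul_subset _ _).trans ((add_subset_add
      ((wSupp_pderivX_subset f).trans (sub_subset_sub_right hf))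
      ((wSupp_derivative_subset g).trans (sub_subset_sub_right hg))).trans_eq ?_)
    rw [sub_add_sub_comm, singleton_add_singleton]
  · refine (wSupp_mul_subset _ _).trans ((add_subset_add
      ((wSupp_derivative_subset f).trans (sub_subset_sub_right hf))
      ((wSupp_pderivX_subset g).trans (sub_subset_sub_right hg))).trans_eq ?_)
    rw [sub_add_sub_comm, singleton_add_singleton, add_comm (τ : ℝ)]

lemma inT_add_eq {H T : FracPoly} {r : ℝ} (hH : wSupp τ H ⊆ {r}) (hT : wSupp τ T ⊆ Ioi r)
    (hH0 : H ≠ 0) : inT τ (H + T) = H := by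
  have hT_zero : ∀ {j : ℕ} {i : ℚ}, (i : ℝ) + τ * j = r → (T.coeff j).coeff i = 0 :=
    fun hw => coeff_coeff_eq_zero_of_wSupp_subset hT (by simp [hw])
  have hord : ordT τ (H + T) = r := by
    refine IsLeast.csInf_eq ⟨?_, fun s hs => ?_⟩
    · obtain ⟨_, j, i, hi, rfl⟩ := wSupp_nonempty (τ := τ) hH0
      have hw := hH (mem_wSupp hi)
      rw [mem_singleton_iff] at hw
      rw [← hw]
      exact mem_wSupp (by rwa [coeff_add, HahnSeries.coeff_add, hT_zero hw, add_zero])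
    · rcases wSupp_add_subset H T hs with hs | hs
      · exact (hH hs).ge
      · exact (hT hs).le
  ext j i
  rw [inT_coeff_coeff, hord, coeff_add, HahnSeries.coeff_add]
  split_ifs with hw
  · rw [hT_zero hw, add_zero]
  · exact (coeff_coeff_eq_zero_of_wSupp_subset hH hw).symm

end wSupp

theorem inT_jac_general (τ : ℚ) (h₁ h₂ : FracPoly)
    (hne : jacF (inT τ h₁) (inT τ h₂) ≠ 0) :
    inT τ (jacF h₁ h₂) = jacF (inT τ h₁) (inT τ h₂) := by
  set r₁ := ordT τ h₁
  set r₂ := ordT τ h₂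
  set H₁ := inT τ h₁
  set H₂ := inT τ h₂
  have hsplit : jacF h₁ h₂ = jacF H₁ H₂ + (jacF H₁ (h₂ - H₂) + jacF (h₁ - H₁) h₂) := by
    simp only [jacF, pderivX_sub, derivative_sub]
    ring
  have hshift : ∀ {S : Set ℝ}, S ⊆ Ioi (r₁ + r₂) →
      S - {1 + (τ : ℝ)} ⊆ Ioi (r₁ + r₂ - (1 + τ)) :=
    fun hS => (sub_subset_sub_right hS).trans_eq (by rw [sub_singleton, image_sub_const_Ioi])
  have hH₁ : wSupp τ H₁ ⊆ Ici r₁ :=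
    (wSupp_inT_subset h₁).trans (singleton_subset_iff.2 self_mem_Ici)
  rw [hsplit]
  refine inT_add_eq (r := r₁ + r₂ - (1 + τ))
    ((wSupp_jacF_subset (wSupp_inT_subset h₁) (wSupp_inT_subset h₂)).trans_eq ?_)
    ((wSupp_add_subset _ _).trans (union_subset ?_ ?_)) hne
  · rw [singleton_add_singleton, singleton_sub_singleton]
  · exact (wSupp_jacF_subset hH₁ (wSupp_sub_inT_subset h₂)).trans
      (hshift (Ici_add_Ioi_subset _ _))
  · exact (wSupp_jacF_subset (wSupp_sub_inT_subset h₁) (wSupp_subset_Ici_ordT h₂)).trans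
      (hshift (Ioi_add_Ici_subset _ _))

/-- If `jac(in_τ(h₁), in_τ(h₂)) ≠ 0`, then
`in_τ(jac(h₁,h₂)) = jac(in_τ(h₁), in_τ(h₂))` for polynomials in `y` whose coefficients
are fractional power series in `x` (nonnegative exponents). -/
theorem inT_jac (τ : ℚ) (hτ : 0 < τ) (h₁ h₂ : FracPoly)
    (hs₁ : ∀ j : ℕ, ∀ i ∈ (h₁.coeff j).support, 0 ≤ i)
    (hs₂ : ∀ j : ℕ, ∀ i ∈ (h₂.coeff j).support, 0 ≤ i)
    (hne : jacF (inT τ h₁) (inT τ h₂) ≠ 0) :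
    inT τ (jacF h₁ h₂) = jacF (inT τ h₁) (inT τ h₂) :=
  inT_jac_general τ h₁ h₂ hne

end
end

section
/- The weighted initial part of a product of fractional power series polynomials is the product of their weighted initial parts: in_τ(g·h) = in_τ(g)·in_τ(h). -/
noncomputable section

open Polynomial

/-! The regrading `x^i y^j ↦ t^(i + τ j) Y^j` is an injective ring homomorphism from polynomials
in `y` over Hahn series in `x` to Hahn series in `t` over `ℂ[Y]`. It turns `ord_τ` into the order
in `t` and `in_τ` into the leading term, and over a domain the leading term of a product of Hahn
series is the product of the leading terms. -/

namespace HahnSeries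

variable {Γ R S : Type*}

section Map

variable [AddCommMonoid Γ] [PartialOrder Γ] [IsOrderedCancelAddMonoid Γ] [Semiring R] [Semiring S]

def mapRingHom (f : R →+* S) : R⟦Γ⟧ →+* S⟦Γ⟧ where
  toFun x := x.map f
  map_zero' := HahnSeries.map_zero f.toZeroHom
  map_one' := by
    ext w
    simp only [map_coeff, coeff_one]
    split_ifs <;> simp
  map_add' x y := by ext; simp
  map_mul' x y := HahnSeries.map_mul f.toNonUnitalRingHom

@[simp]
theorem coeff_mapRingHom (f : R →+* S) (x : R⟦Γ⟧) (w : Γ) :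
    (mapRingHom f x).coeff w = f (x.coeff w) :=
  rfl

end Map

section LeadingTerm

variable [AddCommMonoid Γ] [LinearOrder Γ]

def leadingTerm [Zero R] (x : R⟦Γ⟧) : R⟦Γ⟧ :=
  single x.order x.leadingCoeff

@[simp]
theorem leadingTerm_zero [Zero R] : leadingTerm (0 : R⟦Γ⟧) = 0 := by
  simp [leadingTerm]

theorem leadingTerm_mul [IsOrderedCancelAddMonoid Γ] [NonUnitalNonAssocSemiring R]
    [NoZeroDivisors R] (x y : R⟦Γ⟧) :
    leadingTerm (x * y) = leadingTerm x * leadingTerm y := by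
  rcases eq_or_ne x 0 with rfl | hx
  · simp
  rcases eq_or_ne y 0 with rfl | hy
  · simp
  rw [leadingTerm, leadingTerm, leadingTerm, single_mul_single, order_mul hx hy, leadingCoeff_mul]

end LeadingTerm

end HahnSeries

section Regrade

variable {Γ R : Type*} [AddCommGroup Γ] [PartialOrder Γ] [IsOrderedAddMonoid Γ] [CommSemiring R]

def regrade (τ : Γ) : (HahnSeries Γ R)[X] →+* HahnSeries Γ R[X] :=
  eval₂RingHom (HahnSeries.mapRingHom C) (HahnSeries.single τ X)

theorem coeff_coeff_regrade (τ : Γ) (g : (HahnSeries Γ R)[X]) (w : Γ) (j : ℕ) :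
    ((regrade τ g).coeff w).coeff j = (g.coeff j).coeff (w - j • τ) := by
  induction g using Polynomial.induction_on' with
  | add p q hp hq => simp [hp, hq]
  | monomial n a =>
    simp only [regrade, coe_eval₂RingHom, eval₂_monomial, HahnSeries.single_pow,
      HahnSeries.coeff_mul_single, HahnSeries.coeff_mapRingHom, coeff_C_mul_X_pow, coeff_monomial]
    split_ifs <;> subst_vars <;> simp_all

theorem regrade_injective (τ : Γ) : Function.Injective (regrade (R := R) τ) := by
  intro g h hgh
  ext j i
  simpa [coeff_coeff_regrade] using congrArg (fun x => (x.coeff (i + j • τ)).coeff j) hgh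

end Regrade

theorem truncAt_zero (τ : ℚ) (r : ℝ) (j : ℕ) : truncAt τ r j 0 = 0 := by
  ext i
  simp [truncAt]

theorem coeff_truncAt (τ : ℚ) (r : ℝ) (j : ℕ) (a : HahnSeries ℚ ℂ) (i : ℚ) :
    (truncAt τ r j a).coeff i = if (i : ℝ) + τ * j = r then a.coeff i else 0 :=
  rfl

theorem coeff_inT (τ : ℚ) (g : FracPoly) (j : ℕ) :
    (inT τ g).coeff j = truncAt τ (ordT τ g) j (g.coeff j) := by
  rw [inT, Polynomial.coeff_sum, Polynomial.sum_def]
  simp only [coeff_C_mul_X_pow]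
  rw [Finset.sum_ite_eq]
  split_ifs with hj
  · rfl
  · rw [notMem_support_iff.mp hj, truncAt_zero]

@[simp]
theorem inT_zero (τ : ℚ) : inT τ 0 = 0 := by
  ext1 j
  rw [coeff_inT, Polynomial.coeff_zero, truncAt_zero]

theorem wSupp_eq_image_support_regrade (τ : ℚ) (g : FracPoly) :
    wSupp τ g = ((↑) : ℚ → ℝ) '' (regrade τ g).support := by
  ext r
  constructor
  · rintro ⟨j, i, hi, rfl⟩
    refine ⟨i + j • τ, ?_, by push_cast [nsmul_eq_mul]; ring⟩
    rw [HahnSeries.mem_support]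
    intro h0
    have := coeff_coeff_regrade τ g (i + j • τ) j
    rw [h0, add_sub_cancel_right] at this
    exact hi (by simpa using this.symm)
  · rintro ⟨w, hw, rfl⟩
    obtain ⟨j, hj⟩ : ∃ j, ((regrade τ g).coeff w).coeff j ≠ 0 := by
      by_contra! hc
      exact hw (Polynomial.ext hc)
    rw [coeff_coeff_regrade] at hj
    exact ⟨j, w - j • τ, hj, by push_cast [nsmul_eq_mul]; ring⟩

theorem ordT_eq_order_regrade {τ : ℚ} {g : FracPoly} (hg : g ≠ 0) :
    ordT τ g = (regrade τ g).order := by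
  have hregrade : regrade τ g ≠ 0 := (map_ne_zero_iff _ (regrade_injective τ)).mpr hg
  have hord : (regrade τ g).order ∈ (regrade τ g).support := by
    rw [HahnSeries.mem_support, ← HahnSeries.leadingCoeff_eq]
    exact HahnSeries.leadingCoeff_ne_zero.mpr hregrade
  rw [ordT, wSupp_eq_image_support_regrade]
  refine IsLeast.csInf_eq ⟨⟨_, hord, rfl⟩, ?_⟩
  rintro _ ⟨w, hw, rfl⟩
  exact_mod_cast HahnSeries.order_le_of_coeff_ne_zero hw

theorem regrade_inT (τ : ℚ) (g : FracPoly) :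
    regrade τ (inT τ g) = HahnSeries.leadingTerm (regrade τ g) := by
  rcases eq_or_ne g 0 with rfl | hg
  · simp
  ext w j
  have hw : ((w - j • τ : ℚ) : ℝ) + τ * j = ordT τ g ↔ w = (regrade τ g).order := by
    rw [ordT_eq_order_regrade hg, nsmul_eq_mul]
    push_cast
    constructor
    · intro h
      exact_mod_cast (by linarith : (w : ℝ) = (regrade τ g).order)
    · rintro rfl
      ring
  rw [coeff_coeff_regrade, coeff_inT, coeff_truncAt, if_congr hw rfl rfl, HahnSeries.leadingTerm,
    HahnSeries.coeff_single, HahnSeries.leadingCoeff_eq]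
  split_ifs with h
  · rw [h, coeff_coeff_regrade]
  · rfl

theorem inT_mul_general (τ : ℚ) (g h : FracPoly) :
    inT τ (g * h) = inT τ g * inT τ h := by
  apply regrade_injective τ
  rw [map_mul, regrade_inT, regrade_inT, regrade_inT, map_mul, HahnSeries.leadingTerm_mul]

/-- The weighted initial part of a product is the product of the weighted initial parts:
`in_τ(g·h) = in_τ(g)·in_τ(h)`. -/
theorem inT_mul (τ : ℚ) (hτ : 0 < τ) (g h : FracPoly)
    (hsg : ∀ j : ℕ, ∀ i ∈ (g.coeff j).support, 0 ≤ i)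
    (hsh : ∀ j : ℕ, ∀ i ∈ (h.coeff j).support, 0 ≤ i)
    (hg : g ≠ 0) (hh : h ≠ 0) :
    inT τ (g * h) = inT τ g * inT τ h :=
  inT_mul_general τ g h

end
end

section
/- Let b₀ < b₁ < ... < b_g be positive integers with gcd(b₀,...,b_g) = 1 and such that setting l_k = gcd(b₀,...,b_k) one has l_{k-1} > l_k for all k. Define b̄₀ = b₀, b̄₁ = b₁, and b̄_q = n_{q-1}·b̄_{q-1} + b_q - b_{q-1} for 2 ≤ q ≤ g, where n_i = l_{i-1}/l_i. Then gcd(b̄₀,...,b̄_k) = l_k = gcd(b₀,...,b_k) for every k ∈ {0,...,g}. -/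
/-- Let `b₀ < b₁ < ... < b_g` be positive integers with `gcd(b₀,...,b_g) = 1`, let
`l_k = gcd(b₀,...,b_k)` (with `l_{k-1} > l_k` for all `1 ≤ k ≤ g`), `n_i = l_{i-1}/l_i`,
and let `b̄₀ = b₀`, `b̄₁ = b₁`, `b̄_q = n_{q-1} b̄_{q-1} + b_q - b_{q-1}` for `2 ≤ q ≤ g`.
Then `gcd(b̄₀,...,b̄_k) = l_k = gcd(b₀,...,b_k)` for every `k ∈ {0,...,g}`. -/
theorem gcd_semigroup_generators_eq_gcd_char (g : ℕ) (hg : 1 ≤ g)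
    (b l n bb L : ℕ → ℕ)
    (hbpos : ∀ k, k ≤ g → 0 < b k)
    (hbmono : ∀ k, k < g → b k < b (k + 1))
    (hl0 : l 0 = b 0)
    (hl : ∀ k, k < g → l (k + 1) = Nat.gcd (l k) (b (k + 1)))
    (hlg : l g = 1)
    (hldec : ∀ k, 1 ≤ k → k ≤ g → l k < l (k - 1))
    (hn : ∀ i, 1 ≤ i → i ≤ g → n i = l (i - 1) / l i)
    (hbb0 : bb 0 = b 0) (hbb1 : bb 1 = b 1)
    (hbbrec : ∀ q, 2 ≤ q → q ≤ g → bb q = n (q - 1) * bb (q - 1) + b q - b (q - 1))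
    (hL0 : L 0 = bb 0)
    (hL : ∀ k, k < g → L (k + 1) = Nat.gcd (L k) (bb (k + 1))) :
    ∀ k, k ≤ g → L k = l k := by
  -- positivity of l
  have lpos : ∀ k, k ≤ g → 0 < l k := by
    intro k hk
    induction k with
    | zero => rw [hl0]; exact hbpos 0 (Nat.zero_le g)
    | succ m ih =>
      rw [hl m (by omega)]
      exact Nat.gcd_pos_of_pos_right _ (hbpos (m + 1) hk)
  -- n k ≥ 1
  have npos : ∀ k, 1 ≤ k → k ≤ g → 1 ≤ n k := by
    intro k h1 h2
    rw [hn k h1 h2]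
    have := hldec k h1 h2
    have := lpos k h2
    exact (Nat.one_le_div_iff this).2 (by omega)
  -- main strengthened induction
  have main : ∀ k, k ≤ g →
      L k = l k ∧ (1 ≤ k → b k ≤ bb k ∧ l (k - 1) ∣ bb k - b k) := by
    intro k hk
    induction k with
    | zero =>
      refine ⟨?_, by omega⟩
      rw [hL0, hbb0, hl0]
    | succ m ih =>
      obtain ⟨ihL, ihQ⟩ := ih (by omega)
      -- first establish the invariant Q (m+1)
      have hQ : b (m + 1) ≤ bb (m + 1) ∧ l m ∣ bb (m + 1) - b (m + 1) := by
        rcases Nat.eq_zero_or_pos m with rfl | hm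
        · rw [hbb1]
          exact ⟨le_rfl, by simp⟩
        · -- m ≥ 1, so m + 1 ≥ 2
          have hrec := hbbrec (m + 1) (by omega) hk
          simp only [Nat.add_sub_cancel] at hrec
          obtain ⟨hble, hdvd⟩ := ihQ hm
          -- l m ∣ l (m-1), l m ∣ b m
          have hlm : l m = Nat.gcd (l (m - 1)) (b m) := by
            have h := hl (m - 1) (by omega)
            have e : m - 1 + 1 = m := by omega
            rwa [e] at h
          have hd1 : l m ∣ l (m - 1) := hlm ▸ Nat.gcd_dvd_left _ _
          have hd2 : l m ∣ b m := hlm ▸ Nat.gcd_dvd_right _ _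
          have hdbb : l m ∣ bb m := by
            have : l m ∣ bb m - b m := hd1.trans hdvd
            have h := Nat.dvd_add this hd2
            rwa [Nat.sub_add_cancel hble] at h
          have hn1 : 1 ≤ n m := npos m hm (by omega)
          have hA : bb m ≤ n m * bb m := Nat.le_mul_of_pos_left _ hn1
          have hmono := hbmono m (by omega)
          constructor
          · omega
          · have heq : bb (m + 1) - b (m + 1) = n m * bb m - b m := by omega
            rw [heq]
            exact Nat.dvd_sub (hdbb.mul_left _) hd2
      refine ⟨?_, fun _ => hQ⟩
      -- compute L (m+1)
      obtain ⟨hble, hdvd⟩ := hQ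
      obtain ⟨t, ht⟩ := hdvd
      have hbb' : bb (m + 1) = b (m + 1) + l m * t := by omega
      rw [hL m (by omega), ihL, hbb', Nat.gcd_add_mul_left_right, hl m (by omega)]
  exact fun k hk => (main k hk).1
end

section
/- Let f be an irreducible Weierstrass polynomial with semigroup generators b̄₀,...,b̄_g, gcds l_i, and quotients n_i = l_{i-1}/l_i. For k ≤ g-2, the sequence of rationals l_k, l_{k+1}·b̄_{k+2}/b̄_{k+1}, l_{k+2}·b̄_{k+3}/b̄_{k+1}, ..., l_{g-1}·b̄_g/b̄_{k+1} is strictly increasing. -/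
/-- The jacobian invariants are strictly increasing.  With `b₀ < b₁ < ... < b_g` a Puiseux
characteristic, `l_i = gcd(b₀,...,b_i)`, `n_i = l_{i-1}/l_i ≥ 2` and semigroup generators
`b̄₀ = b₀`, `b̄₁ = b₁`, `b̄_q = n_{q-1} b̄_{q-1} + b_q - b_{q-1}`, for any `k ≤ g-2` the
sequence `l_k, l_{k+1}·b̄_{k+2}/b̄_{k+1}, ..., l_{g-1}·b̄_g/b̄_{k+1}` is strictly
increasing. -/
theorem jacobian_invariants_strict_mono (g k : ℕ) (hg : 2 ≤ g) (hk : k ≤ g - 2)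
    (b l n bb : ℕ → ℕ)
    (hbpos : ∀ i, i ≤ g → 0 < b i)
    (hbmono : ∀ i, i < g → b i < b (i + 1))
    (hl0 : l 0 = b 0)
    (hl : ∀ i, i < g → l (i + 1) = Nat.gcd (l i) (b (i + 1)))
    (hlg : l g = 1)
    (hn1 : ∀ i, 1 ≤ i → i ≤ g → 2 ≤ n i)
    (hn : ∀ i, 1 ≤ i → i ≤ g → n i = l (i - 1) / l i)
    (hbb0 : bb 0 = b 0) (hbb1 : bb 1 = b 1)
    (hbbrec : ∀ q, 2 ≤ q → q ≤ g → bb q = n (q - 1) * bb (q - 1) + b q - b (q - 1)) :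
    (l k : ℚ) < (l (k + 1) : ℚ) * (bb (k + 2) : ℚ) / (bb (k + 1) : ℚ) ∧
    (∀ i, k + 2 ≤ i → i ≤ g - 1 →
      (l (i - 1) : ℚ) * (bb i : ℚ) / (bb (k + 1) : ℚ)
        < (l i : ℚ) * (bb (i + 1) : ℚ) / (bb (k + 1) : ℚ)) := by

  have hkg : k + 2 ≤ g := by omega
  -- positivity of l
  have hlpos : ∀ i, i ≤ g → 0 < l i := by
    intro i hi
    induction i with
    | zero => rw [hl0]; exact hbpos 0 (by omega)
    | succ j ih =>
      rw [hl j (by omega)]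
      exact Nat.gcd_pos_of_pos_right _ (hbpos (j + 1) hi)
  -- positivity of bb
  have hbbpos : ∀ q, q ≤ g → 0 < bb q := by
    intro q hq
    match q with
    | 0 => rw [hbb0]; exact hbpos 0 (by omega)
    | 1 => rw [hbb1]; exact hbpos 1 (by omega)
    | (j + 2) =>
      rw [hbbrec (j + 2) (by omega) hq]
      simp only [show j + 2 - 1 = j + 1 from rfl, show j + 1 + 1 = j + 2 from rfl] at *
      have h2 : b (j + 1) < b (j + 2) := hbmono (j + 1) (by omega)
      omega
  -- key inequality in ℕ
  have key : ∀ i, 1 ≤ i → i + 1 ≤ g → l (i - 1) * bb i < l i * bb (i + 1) := by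
    intro i h1 h2
    have hdvd : l i ∣ l (i - 1) := by
      have heq : l i = Nat.gcd (l (i - 1)) (b i) := by
        have h := hl (i - 1) (by omega)
        rwa [Nat.sub_add_cancel h1] at h
      rw [heq]; exact Nat.gcd_dvd_left _ _
    have hli : 0 < l i := hlpos i (by omega)
    have hln : l (i - 1) = n i * l i := by
      rw [hn i h1 (by omega)]
      exact (Nat.div_mul_cancel hdvd).symm
    have hbbr := hbbrec (i + 1) (by omega) h2
    rw [Nat.add_sub_cancel] at hbbr
    have hbm := hbmono i (by omega)
    have hkey : n i * bb i < bb (i + 1) := by omega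
    calc l (i - 1) * bb i = l i * (n i * bb i) := by rw [hln]; ring
    _ < l i * bb (i + 1) := by exact mul_lt_mul_of_pos_left hkey hli
  have hbbk1 : (0 : ℚ) < (bb (k + 1) : ℚ) := by
    exact_mod_cast hbbpos (k + 1) (by omega)
  constructor
  · rw [lt_div_iff₀ hbbk1]
    have h := key (k + 1) (by omega) (by omega)
    exact_mod_cast h
  · intro i hi1 hi2
    have h := key i (by omega) (by omega)
    have h' : (l (i - 1) : ℚ) * (bb i : ℚ) < (l i : ℚ) * (bb (i + 1) : ℚ) := by
      exact_mod_cast h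
    exact div_lt_div_of_pos_right h' hbbk1
end

section
/- Let h₁, h₂, h₃ be irreducible power series in ℂ{x,y} co-prime to x. Then the contact satisfies the strong triangle inequality: cont(h₁,h₂) ≥ min(cont(h₁,h₃), cont(h₂,h₃)). -/
/-!
Twisting a Hahn series coefficientwise by the character `q ↦ exp(2πiq)` of `ℚ` is a ring
automorphism `σ` of `ℂ⟦ℚ⟧` that fixes power series in `x`, preserves `ord_x`, and whose fixed
elements are exactly the Laurent series. Since `h₃` stays irreducible over Laurent series (Gauss's
lemma), the polynomial `∏ (X - σᵏ γ)` over the `σ`-orbit of one root `γ` of `h₃` has Laurent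
coefficients, so `h₃` divides it and every root of `h₃` lies in that orbit. Now let `(α, γ)` and
`(β, γ')` realise `cont(h₁,h₃)` and `cont(h₂,h₃)`, and `γ' = σᵏ γ`. Then `σᵏ α` is again a root of
`h₁` at distance `cont(h₁,h₃)` from `γ'`, and the ultrametric inequality for `ord_x` gives
`cont(h₁,h₂) ≥ ord_x(σᵏ α - β) ≥ min(cont(h₁,h₃), cont(h₂,h₃))`.
-/

noncomputable section

open Polynomial

/-- The contact `cont(A,B) = max { ord_x(α - β) : α ∈ A, β ∈ B }` between two (nonempty,
finite) sets of fractional power series, valued in `WithTop ℚ` (the value `⊤` occurring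
when some `α = β`). -/
def contactSets (A B : Finset (HahnSeries ℚ ℂ)) (hA : A.Nonempty) (hB : B.Nonempty) :
    WithTop ℚ :=
  (A ×ˢ B).sup' (hA.product hB) fun p => (p.1 - p.2).orderTop

open Function

theorem Set.MapsTo.mem_periodicPts {α : Type*} {f : α → α} {s : Set α} (hf : MapsTo f s s)
    (hinj : InjOn f s) (hs : s.Finite) {x : α} (hx : x ∈ s) : x ∈ periodicPts f := by
  have := hs.to_subtype
  obtain ⟨n, hn, hper⟩ := (hf.restrict_inj.2 hinj).mem_periodicPts ⟨x, hx⟩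
  refine ⟨n, hn, ?_⟩
  have := congrArg Subtype.val hper.eq
  rwa [hf.coe_iterate_restrict] at this

namespace Polynomial

variable {K L : Type*}

theorem eval₂_iterate_eq_zero [Semiring K] [CommSemiring L] {φ : K →+* L} {σ : L →+* L}
    (hσφ : σ.comp φ = φ) {p : K[X]} {x : L} (hx : p.eval₂ φ x = 0) (k : ℕ) :
    p.eval₂ φ (σ^[k] x) = 0 := by
  induction k with
  | zero => exact hx
  | succ k ih => rw [iterate_succ_apply', ← hσφ, ← hom_eval₂, ih, map_zero]

theorem exists_iterate_eq_of_irreducible [Field K] [CommRing L] [IsDomain L] {φ : K →+* L}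
    {σ : L →+* L} (hfix : ∀ a, σ a = a → a ∈ φ.range) {p : K[X]} (hp : Irreducible p)
    {γ γ' : L} (hγ : γ ∈ periodicPts σ) (hpγ : p.eval₂ φ γ = 0) (hpγ' : p.eval₂ φ γ' = 0) :
    ∃ k, σ^[k] γ = γ' := by
  let := φ.toAlgebra
  obtain ⟨N, hN, hper⟩ := hγ
  -- the polynomial whose roots are the orbit of `γ`; it is `σ`-invariant since `σ^[N] γ = γ`
  set P : L[X] := ∏ k ∈ Finset.range N, (X - C (σ^[k] γ)) with hP
  have hPσ : P.map σ = P := by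
    have hshift := Finset.prod_range_succ' (fun k => X - C (σ^[k] γ)) N
    rw [Finset.prod_range_succ, hper.eq, iterate_zero_apply] at hshift
    simp only [hP, Polynomial.map_prod, Polynomial.map_sub, map_X, map_C, ← iterate_succ_apply' σ]
    exact mul_right_cancel₀ (X_sub_C_ne_zero γ) hshift.symm
  obtain ⟨P₀, hP₀⟩ : ∃ P₀ : K[X], P₀.map φ = P :=
    mem_lifts _ |>.1 <| (lifts_iff_coeff_lifts P).2 fun n => hfix _ (by rw [← coeff_map, hPσ])
  have hP₀γ : aeval γ P₀ = 0 := by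
    change eval₂ φ γ P₀ = 0
    rw [← eval_map, hP₀, eval_prod]
    exact Finset.prod_eq_zero (Finset.mem_range.2 hN) (by simp)
  obtain ⟨q, rfl⟩ := (hp.dvd_iff_aeval_eq_zero hpγ).1 hP₀γ
  have hPγ' : P.eval γ' = 0 := by rw [← hP₀, eval_map, eval₂_mul, hpγ', zero_mul]
  obtain ⟨k, -, hk⟩ := Finset.prod_eq_zero_iff.1 (by rwa [eval_prod] at hPγ')
  exact ⟨k, (sub_eq_zero.1 (by simpa using hk)).symm⟩

end Polynomial

namespace HahnSeries

section

variable {Γ R : Type*} [AddCommMonoid Γ] [PartialOrder Γ] [IsOrderedCancelAddMonoid Γ]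
  [CommSemiring R]

def twist (ψ : AddChar Γ R) : R⟦Γ⟧ →+* R⟦Γ⟧ where
  toFun f := ⟨fun g => ψ g * f.coeff g, f.isPWO_support.mono fun _ => right_ne_zero_of_mul⟩
  map_one' := by
    ext g
    by_cases hg : g = 0 <;> simp [coeff_one, hg]
  map_mul' x y := by
    ext a
    have hsplit : ∀ i j, ψ (i + j) * (x.coeff i * y.coeff j) =
        ψ i * x.coeff i * (ψ j * y.coeff j) := fun i j => by
      rw [AddChar.map_add_eq_mul]; ring
    simp only [coeff_mul, Finset.mul_sum]
    refine (Finset.sum_subset (fun ij hij => ?_) fun ij hij hij' => ?_).symm.trans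
      (Finset.sum_congr rfl fun ij hij => ?_)
    · simp only [Finset.mem_antidiagonal, mem_support] at hij ⊢
      exact ⟨right_ne_zero_of_mul hij.1, right_ne_zero_of_mul hij.2.1, hij.2.2⟩
    · obtain ⟨-, -, rfl⟩ := Finset.mem_antidiagonal.1 hij
      simp only [Finset.mem_antidiagonal, mem_support, not_and] at hij'
      rw [hsplit]
      by_cases hx : ψ ij.1 * x.coeff ij.1 = 0
      · rw [hx, zero_mul]
      by_cases hy : ψ ij.2 * y.coeff ij.2 = 0
      · rw [hy, mul_zero]
      exact absurd trivial (hij' hx hy)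
    · obtain ⟨-, -, rfl⟩ := Finset.mem_antidiagonal.1 hij
      exact hsplit ..
  map_zero' := by ext; simp
  map_add' x y := by ext; simp [mul_add]

@[simp]
theorem coeff_twist (ψ : AddChar Γ R) (f : R⟦Γ⟧) (g : Γ) :
    (twist ψ f).coeff g = ψ g * f.coeff g :=
  rfl

end

section

variable {Γ R : Type*} [AddCommGroup Γ] [PartialOrder Γ] [IsOrderedAddMonoid Γ] [CommSemiring R]

theorem coeff_twist_eq_zero_iff (ψ : AddChar Γ R) (f : R⟦Γ⟧) (g : Γ) :
    (twist ψ f).coeff g = 0 ↔ f.coeff g = 0 :=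
  (ψ.val_isUnit g).mul_right_eq_zero

theorem twist_eq_self_iff [IsDomain R] (ψ : AddChar Γ R) (f : R⟦Γ⟧) :
    twist ψ f = f ↔ ∀ g ∈ f.support, ψ g = 1 := by
  simp only [HahnSeries.ext_iff, funext_iff, coeff_twist, mem_support]
  refine forall_congr' fun g => ⟨fun h hg => (mul_eq_right₀ hg).1 h, fun h => ?_⟩
  by_cases hg : f.coeff g = 0
  · rw [hg, mul_zero]
  · rw [h hg, one_mul]

end

theorem orderTop_twist {Γ R : Type*} [AddCommGroup Γ] [LinearOrder Γ] [IsOrderedAddMonoid Γ]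
    [CommSemiring R] (ψ : AddChar Γ R) (f : R⟦Γ⟧) : (twist ψ f).orderTop = f.orderTop :=
  eq_of_forall_le_iff fun _ => by simp only [le_orderTop_iff_forall, coeff_twist_eq_zero_iff]

theorem orderTop_iterate_twist_sub {Γ R : Type*} [AddCommGroup Γ] [LinearOrder Γ]
    [IsOrderedAddMonoid Γ] [CommRing R] (ψ : AddChar Γ R) (k : ℕ) (a b : R⟦Γ⟧) :
    ((twist ψ)^[k] a - (twist ψ)^[k] b).orderTop = (a - b).orderTop := by
  rw [← RingHom.coe_pow, ← map_sub, RingHom.coe_pow]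
  exact congrFun (iterate_invariant (g := orderTop) (funext (orderTop_twist ψ)) k) (a - b)

theorem embDomain_embDomain {Γ Γ' Γ'' R : Type*} [PartialOrder Γ] [PartialOrder Γ']
    [PartialOrder Γ''] [Zero R] (f : Γ ↪o Γ') (g : Γ' ↪o Γ'') (x : R⟦Γ⟧) :
    embDomain g (embDomain f x) = embDomain (f.trans g) x := by
  ext c
  by_cases hc : c ∈ Set.range (f.trans g)
  · obtain ⟨a, rfl⟩ := hc
    rw [embDomain_coeff, RelEmbedding.trans_apply, embDomain_coeff, embDomain_coeff]
  rw [embDomain_of_notMem_range hc]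
  by_cases hc' : c ∈ Set.range g
  · obtain ⟨b, rfl⟩ := hc'
    rw [embDomain_coeff, embDomain_of_notMem_range]
    rintro ⟨a, rfl⟩
    exact hc ⟨a, rfl⟩
  · exact embDomain_of_notMem_range hc'

theorem exists_embDomain_eq {Γ Γ' R : Type*} [PartialOrder Γ] [PartialOrder Γ'] [Zero R]
    (f : Γ ↪o Γ') {y : R⟦Γ'⟧} (hy : y.support ⊆ Set.range f) :
    ∃ x : R⟦Γ⟧, embDomain f x = y := by
  refine ⟨⟨fun a => y.coeff (f a), Set.isPWO_iff_exists_monotone_subseq.2 fun u hu => ?_⟩, ?_⟩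
  · obtain ⟨g, hg⟩ := y.isPWO_support.exists_monotone_subseq (f := f ∘ u) hu
    exact ⟨g, fun m n hmn => f.le_iff_le.1 (hg hmn)⟩
  · ext c
    by_cases hc : c ∈ Set.range f
    · obtain ⟨a, rfl⟩ := hc
      exact embDomain_coeff
    · rw [embDomain_of_notMem_range hc]
      by_contra h
      exact hc (hy (Ne.symm h))

end HahnSeries

open HahnSeries

def ratFourierChar : AddChar ℚ ℂ where
  toFun q := Complex.exp (2 * Real.pi * Complex.I * q)
  map_zero_eq_one' := by simp
  map_add_eq_mul' a b := by push_cast; rw [mul_add, Complex.exp_add]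

theorem ratFourierChar_eq_one_iff (q : ℚ) : ratFourierChar q = 1 ↔ q ∈ Set.range Int.cast := by
  change Complex.exp _ = 1 ↔ _
  rw [Complex.exp_eq_one_iff]
  refine exists_congr fun n => ?_
  rw [mul_comm (n : ℂ), mul_right_inj' Complex.two_pi_I_ne_zero, eq_comm]
  exact_mod_cast Iff.rfl

def LaurentSeries.toRatHahnSeries (R : Type*) [Semiring R] : LaurentSeries R →+* R⟦ℚ⟧ :=
  embDomainRingHom (Int.castAddHom ℚ) Int.cast_injective fun _ _ => Int.cast_le

theorem LaurentSeries.toRatHahnSeries_comp_algebraMap (R : Type*) [CommSemiring R] :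
    (toRatHahnSeries R).comp (algebraMap (PowerSeries R) (LaurentSeries R)) =
      ofPowerSeries ℚ R := by
  ext x : 1
  exact (embDomain_embDomain _ _ _).trans (congrArg (embDomain · _) (by ext; simp))

/-- On a Puiseux series in `x ^ (1 / n)` this is the substitution
`x ^ (1 / n) ↦ exp(2πi / n) • x ^ (1 / n)`. -/
abbrev puiseuxMonodromy : ℂ⟦ℚ⟧ →+* ℂ⟦ℚ⟧ := twist ratFourierChar

theorem puiseuxMonodromy_eq_self_iff (f : ℂ⟦ℚ⟧) :
    puiseuxMonodromy f = f ↔ f ∈ (LaurentSeries.toRatHahnSeries ℂ).range := by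
  simp only [twist_eq_self_iff, ratFourierChar_eq_one_iff, RingHom.mem_range]
  refine ⟨fun h => exists_embDomain_eq _ h, ?_⟩
  rintro ⟨g, rfl⟩ q hq
  obtain ⟨n, -, rfl⟩ := support_embDomain_subset hq
  exact ⟨n, rfl⟩

theorem puiseuxMonodromy_comp_ofPowerSeries :
    puiseuxMonodromy.comp (ofPowerSeries ℚ ℂ) = ofPowerSeries ℚ ℂ := by
  have hfix : puiseuxMonodromy.comp (LaurentSeries.toRatHahnSeries ℂ) =
      LaurentSeries.toRatHahnSeries ℂ :=
    RingHom.ext fun g => (puiseuxMonodromy_eq_self_iff _).2 ⟨g, rfl⟩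
  rw [← LaurentSeries.toRatHahnSeries_comp_algebraMap, ← RingHom.comp_assoc, hfix]

theorem exists_puiseuxMonodromy_iterate_eq {h : (PowerSeries ℂ)[X]} (hh : Irreducible h)
    {Z : Finset ℂ⟦ℚ⟧} (hZ : ∀ γ, γ ∈ Z ↔ h.eval₂ (ofPowerSeries ℚ ℂ) γ = 0) {γ γ' : ℂ⟦ℚ⟧}
    (hγ : γ ∈ Z) (hγ' : γ' ∈ Z) : ∃ k, puiseuxMonodromy^[k] γ = γ' := by
  have heval : ∀ δ, (h.map (algebraMap _ (LaurentSeries ℂ))).eval₂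
      (LaurentSeries.toRatHahnSeries ℂ) δ = h.eval₂ (ofPowerSeries ℚ ℂ) δ := fun δ => by
    rw [eval₂_map, LaurentSeries.toRatHahnSeries_comp_algebraMap]
  have hdeg : h.natDegree ≠ 0 := (natDegree_pos_of_eval₂_root hh.ne_zero _ ((hZ γ).1 hγ)
    fun _ => (map_eq_zero_iff _ ofPowerSeries_injective).1).ne'
  have hirr := (hh.isPrimitive hdeg).irreducible_iff_irreducible_map_fraction_map
    (K := LaurentSeries ℂ) |>.1 hh
  have hper : γ ∈ periodicPts puiseuxMonodromy := by
    refine Set.MapsTo.mem_periodicPts (s := Z) (fun δ hδ => (hZ _).2 ?_)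
      puiseuxMonodromy.injective.injOn Z.finite_toSet hγ
    exact eval₂_iterate_eq_zero puiseuxMonodromy_comp_ofPowerSeries ((hZ δ).1 hδ) 1
  exact exists_iterate_eq_of_irreducible (fun a => (puiseuxMonodromy_eq_self_iff a).1)
    hirr hper (by rw [heval]; exact (hZ γ).1 hγ) (by rw [heval]; exact (hZ γ').1 hγ')

theorem contact_strong_triangle_inequality_general
    (h₁ h₃ : Polynomial (PowerSeries ℂ))
    (hirr₃ : Irreducible h₃)
    (Z₁ Z₂ Z₃ : Finset (HahnSeries ℚ ℂ))
    (hZ₁ : ∀ γ, γ ∈ Z₁ ↔ Polynomial.eval₂ (HahnSeries.ofPowerSeries ℚ ℂ) γ h₁ = 0)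
    (hZ₃ : ∀ γ, γ ∈ Z₃ ↔ Polynomial.eval₂ (HahnSeries.ofPowerSeries ℚ ℂ) γ h₃ = 0)
    (hne₁ : Z₁.Nonempty) (hne₂ : Z₂.Nonempty) (hne₃ : Z₃.Nonempty) :
    min (contactSets Z₁ Z₃ hne₁ hne₃) (contactSets Z₂ Z₃ hne₂ hne₃)
      ≤ contactSets Z₁ Z₂ hne₁ hne₂ := by
  obtain ⟨⟨α, γ⟩, hαγ, h₁₃⟩ :=
    Finset.exists_mem_eq_sup' (hne₁.product hne₃) fun p => (p.1 - p.2).orderTop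
  obtain ⟨⟨β, γ'⟩, hβγ', h₂₃⟩ :=
    Finset.exists_mem_eq_sup' (hne₂.product hne₃) fun p => (p.1 - p.2).orderTop
  simp only [Finset.mem_product] at hαγ hβγ' h₁₃ h₂₃
  obtain ⟨k, rfl⟩ := exists_puiseuxMonodromy_iterate_eq hirr₃ hZ₃ hαγ.2 hβγ'.2
  have hα : puiseuxMonodromy^[k] α ∈ Z₁ := (hZ₁ _).2 <|
    eval₂_iterate_eq_zero puiseuxMonodromy_comp_ofPowerSeries ((hZ₁ α).1 hαγ.1) k
  calc min (contactSets Z₁ Z₃ hne₁ hne₃) (contactSets Z₂ Z₃ hne₂ hne₃)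
      = min (puiseuxMonodromy^[k] α - puiseuxMonodromy^[k] γ).orderTop
          (puiseuxMonodromy^[k] γ - β).orderTop := by
        rw [contactSets, contactSets, h₁₃, h₂₃, orderTop_iterate_twist_sub,
          ← neg_sub (puiseuxMonodromy^[k] γ), orderTop_neg]
    _ ≤ (puiseuxMonodromy^[k] α - puiseuxMonodromy^[k] γ +
          (puiseuxMonodromy^[k] γ - β)).orderTop := min_orderTop_le_orderTop_add
    _ = (puiseuxMonodromy^[k] α - β).orderTop := by rw [sub_add_sub_cancel]
    _ ≤ contactSets Z₁ Z₂ hne₁ hne₂ := by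
        unfold contactSets
        exact Finset.le_sup' (fun p : ℂ⟦ℚ⟧ × ℂ⟦ℚ⟧ => (p.1 - p.2).orderTop)
          (Finset.mem_product.2 ⟨hα, hβγ'.1⟩ : (puiseuxMonodromy^[k] α, β) ∈ Z₁ ×ˢ Z₂)

/-- Strong triangle inequality for the contact: if `h₁, h₂, h₃` are irreducible power
series in `ℂ{x,y}` co-prime to `x` (formalized as irreducible Weierstrass-type polynomials
over formal power series, some coefficient being a unit power series), with Newton–Puiseux
root sets `Z₁, Z₂, Z₃`, then `cont(h₁,h₂) ≥ min(cont(h₁,h₃), cont(h₂,h₃))`. -/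
theorem contact_strong_triangle_inequality
    (h₁ h₂ h₃ : Polynomial (PowerSeries ℂ))
    (hirr₁ : Irreducible h₁) (hirr₂ : Irreducible h₂) (hirr₃ : Irreducible h₃)
    (hx₁ : ∃ j, PowerSeries.constantCoeff (h₁.coeff j) ≠ 0)
    (hx₂ : ∃ j, PowerSeries.constantCoeff (h₂.coeff j) ≠ 0)
    (hx₃ : ∃ j, PowerSeries.constantCoeff (h₃.coeff j) ≠ 0)
    (Z₁ Z₂ Z₃ : Finset (HahnSeries ℚ ℂ))
    (hZ₁ : ∀ γ, γ ∈ Z₁ ↔ Polynomial.eval₂ (HahnSeries.ofPowerSeries ℚ ℂ) γ h₁ = 0)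
    (hZ₂ : ∀ γ, γ ∈ Z₂ ↔ Polynomial.eval₂ (HahnSeries.ofPowerSeries ℚ ℂ) γ h₂ = 0)
    (hZ₃ : ∀ γ, γ ∈ Z₃ ↔ Polynomial.eval₂ (HahnSeries.ofPowerSeries ℚ ℂ) γ h₃ = 0)
    (hne₁ : Z₁.Nonempty) (hne₂ : Z₂.Nonempty) (hne₃ : Z₃.Nonempty) :
    min (contactSets Z₁ Z₃ hne₁ hne₃) (contactSets Z₂ Z₃ hne₂ hne₃)
      ≤ contactSets Z₁ Z₂ hne₁ hne₂ :=
  contact_strong_triangle_inequality_general h₁ h₃ hirr₃ Z₁ Z₂ Z₃ hZ₁ hZ₃ hne₁ hne₂ hne₃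

end
end
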